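/- Let E and F be real Banach spaces with E ≠ {0}, and let T : E → F be a bounded linear operator which is Fredholm of index zero (finite-dimensional kernel and cokernel of equal dimensions). Consider the set C(T) of companions of T, i.e. finite-rank bounded linear operators K : E → F such that T + K is bijective. Then the relation on C(T) defined by K₁ ∼ K₂ iff det((T+K₂)⁻¹(T+K₁)) > 0 is an equivalence relation, and C(T) has exactly two equivalence classes under this relation. -/

import Mathlib

/-!
Write `d(K₁, K₂) = det ((T + K₂)⁻¹ (T + K₁))`. The admissible determinant can be computed on any
finite-dimensional subspace containing `range (id - S)` (block-triangular form), so it is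
multiplicative; hence `d(K, K) = 1` and `d(K₁, K₃) = d(K₂, K₃) d(K₁, K₂)`, so `d(K₁, K₂)` and
`d(K₂, K₁)` are mutually inverse, and positivity of `d` is an equivalence relation.
A companion `K` exists: lift an isomorphism `ker T ≃ coker T` through a continuous projection onto
`ker T`. Precomposing `T + K` with a reflection `x ↦ x - 2 f(x) e` (`f` continuous, `f e = 1`)
gives a companion `K'` with `d(K', K) = -1`, and the cocycle identity then shows that every
companion is equivalent to exactly one of `K`, `K'`.
-/

/-- The determinant of an admissible endomorphism `S` (one with `range (id − S)`
finite-dimensional): the determinant of the restriction of `S` to any finite-dimensional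
subspace containing `range (id − S)`, here the minimal one. -/
noncomputable def admDet {E : Type*} [AddCommGroup E] [Module ℝ E] (S : E →ₗ[ℝ] E) : ℝ :=
  LinearMap.det (S.restrict
    (p := LinearMap.range ((LinearMap.id : E →ₗ[ℝ] E) - S))
    (q := LinearMap.range ((LinearMap.id : E →ₗ[ℝ] E) - S))
    (fun x hx => by
      have h1 : ((LinearMap.id : E →ₗ[ℝ] E) - S) x ∈
          LinearMap.range ((LinearMap.id : E →ₗ[ℝ] E) - S) :=
        LinearMap.mem_range_self _ x
      have h2 : S x = x - ((LinearMap.id : E →ₗ[ℝ] E) - S) x := by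
        simp
      rw [h2]
      exact Submodule.sub_mem _ hx h1))

open Classical in
/-- Inverse of a bijective linear map (junk value `0` otherwise). -/
noncomputable def linInv {E F : Type*} [AddCommGroup E] [Module ℝ E] [AddCommGroup F] [Module ℝ F]
    (f : E →ₗ[ℝ] F) : F →ₗ[ℝ] E :=
  if h : Function.Bijective ⇑f then ((LinearEquiv.ofBijective f h).symm : F →ₗ[ℝ] E) else 0

open LinearMap Function

section Determinant

variable {𝕜 M : Type*} [Field 𝕜] [AddCommGroup M] [Module 𝕜 M]

lemma Submodule.le_comap_of_forall_sub_mem {g : M →ₗ[𝕜] M} {W : Submodule 𝕜 M}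
    (h : ∀ x, x - g x ∈ W) : W ≤ W.comap g := fun x hx => by
  simpa using W.sub_mem hx (h x)

lemma LinearMap.det_eq_det_restrict_of_forall_sub_mem [FiniteDimensional 𝕜 M] {g : M →ₗ[𝕜] M}
    {W : Submodule 𝕜 M} (h : ∀ x, x - g x ∈ W) :
    LinearMap.det g = LinearMap.det (g.restrict (Submodule.le_comap_of_forall_sub_mem h)) := by
  have hQ : W.mapQ W g (Submodule.le_comap_of_forall_sub_mem h) = LinearMap.id := by
    ext x
    simpa [Submodule.Quotient.eq] using W.neg_mem (h x)
  rw [det_eq_det_mul_det W g, hQ, det_id, mul_one]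

lemma LinearMap.det_restrict_eq_det_restrict_of_le {g : M →ₗ[𝕜] M} {W V : Submodule 𝕜 M}
    [FiniteDimensional 𝕜 V] (hWV : W ≤ V)
    (hW : ∀ x, x - g x ∈ W) (hV : ∀ x, x - g x ∈ V) :
    LinearMap.det (g.restrict (Submodule.le_comap_of_forall_sub_mem hV)) =
      LinearMap.det (g.restrict (Submodule.le_comap_of_forall_sub_mem hW)) := by
  set gV := g.restrict (Submodule.le_comap_of_forall_sub_mem hV)
  have hW' : ∀ x, x - gV x ∈ W.comap V.subtype := fun x => hW x
  let e := Submodule.comapSubtypeEquivOfLe hWV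
  have hconj : g.restrict (Submodule.le_comap_of_forall_sub_mem hW) =
      (e : _ →ₗ[𝕜] W) ∘ₗ gV.restrict (Submodule.le_comap_of_forall_sub_mem hW') ∘ₗ
        (e.symm : W →ₗ[𝕜] _) := by
    ext; rfl
  rw [det_eq_det_restrict_of_forall_sub_mem hW', hconj, det_conj]

end Determinant

section AdmissibleDeterminant

variable {E : Type*} [AddCommGroup E] [Module ℝ E]

lemma admDet_eq_det_restrict {S : E →ₗ[ℝ] E} {V : Submodule ℝ E} [FiniteDimensional ℝ V]
    (hV : ∀ x, x - S x ∈ V) :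
    admDet S = LinearMap.det (S.restrict (Submodule.le_comap_of_forall_sub_mem hV)) := by
  have hW : ∀ x, x - S x ∈ range (LinearMap.id - S) := fun x => ⟨x, rfl⟩
  have hWV : range (LinearMap.id - S) ≤ V := by
    rintro _ ⟨x, rfl⟩
    exact hV x
  exact (det_restrict_eq_det_restrict_of_le hWV hW hV).symm

lemma admDet_id : admDet (LinearMap.id : E →ₗ[ℝ] E) = 1 := by
  rw [admDet_eq_det_restrict (V := ⊥) (by simp), Subsingleton.elim (LinearMap.restrict _ _) 1,
    map_one]

lemma admDet_comp {A B : E →ₗ[ℝ] E}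
    [FiniteDimensional ℝ (range (LinearMap.id - A))]
    [FiniteDimensional ℝ (range (LinearMap.id - B))] :
    admDet (A ∘ₗ B) = admDet A * admDet B := by
  set V := range (LinearMap.id - A) ⊔ range (LinearMap.id - B)
  have hA : ∀ x, x - A x ∈ V := fun x => Submodule.mem_sup_left ⟨x, rfl⟩
  have hB : ∀ x, x - B x ∈ V := fun x => Submodule.mem_sup_right ⟨x, rfl⟩
  have hAB : ∀ x, x - A (B x) ∈ V := fun x => by
    simpa using V.add_mem (hB x) (hA (B x))
  rw [admDet_eq_det_restrict hA, admDet_eq_det_restrict hB, admDet_eq_det_restrict hAB,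
    ← det_comp]
  rfl

lemma admDet_id_sub_smulRight (f : Module.Dual ℝ E) (e : E) :
    admDet (LinearMap.id - f.smulRight e) = 1 - f e := by
  rcases eq_or_ne e 0 with rfl | he
  · simp [admDet_id]
  have hV : ∀ x, x - (LinearMap.id - f.smulRight e : E →ₗ[ℝ] E) x ∈ ℝ ∙ e := fun x => by
    simpa using Submodule.smul_mem _ (f x) (Submodule.mem_span_singleton_self e)
  have hres : (LinearMap.id - f.smulRight e : E →ₗ[ℝ] E).restrict
      (Submodule.le_comap_of_forall_sub_mem hV) = (1 - f e) • LinearMap.id := by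
    ext ⟨x, hx⟩
    obtain ⟨c, rfl⟩ := Submodule.mem_span_singleton.mp hx
    simp only [coe_restrict_apply, map_smul, LinearMap.sub_apply, id_coe, id_eq, coe_smulRight,
      LinearMap.smul_apply, SetLike.mk_smul_mk, smul_smul]
    module
  rw [admDet_eq_det_restrict hV, hres, det_smul, finrank_span_singleton he, det_id, pow_one,
    mul_one]

lemma admDet_reflection {f : Module.Dual ℝ E} {e : E} (h : f e = 2) :
    admDet (Module.reflection h : E →ₗ[ℝ] E) = -1 := by
  have : (Module.reflection h : E →ₗ[ℝ] E) = LinearMap.id - f.smulRight e := by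
    ext x
    simp [Module.reflection_apply]
  rw [this, admDet_id_sub_smulRight, h]
  norm_num

end AdmissibleDeterminant

lemma bijective_add_comp_of_ker_equiv_coker {R M N : Type*} [Ring R] [AddCommGroup M] [Module R M]
    [AddCommGroup N] [Module R N] (T : M →ₗ[R] N) (P : M →ₗ[R] ker T) (hP : ∀ x : ker T, P x = x)
    (s : N ⧸ range T →ₗ[R] N) (hs : (range T).mkQ ∘ₗ s = LinearMap.id)
    (B : ker T ≃ₗ[R] N ⧸ range T) :
    Bijective (T + s ∘ₗ B ∘ₗ P) := by
  have hs' (y : N ⧸ range T) : Submodule.Quotient.mk (s y) = y := LinearMap.congr_fun hs y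
  have hT (x : M) : (Submodule.Quotient.mk (T x) : N ⧸ range T) = 0 :=
    (Submodule.Quotient.mk_eq_zero _).mpr (mem_range_self T x)
  refine ⟨(injective_iff_map_eq_zero _).mpr fun x hx => ?_, fun y => ?_⟩
  · have hPx : P x = 0 := by
      simpa [hT, hs'] using congrArg (range T).mkQ hx
    have hx' : x ∈ ker T := by simpa [hPx] using hx
    simpa [hPx] using (hP ⟨x, hx'⟩).symm
  · -- `y - s [y]` lies in `range T`; the kernel component is then fixed by `B⁻¹ [y]`.
    obtain ⟨z, hz⟩ : y - s ((range T).mkQ y) ∈ range T := by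
      rw [← Submodule.Quotient.mk_eq_zero]
      simp [hs']
    refine ⟨z - P z + B.symm ((range T).mkQ y), ?_⟩
    have hTk (k : ker T) : T k = 0 := k.2
    simp [hP, hTk, hz]

lemma finiteDimensional_range_sub {R M N : Type*} [DivisionRing R] [AddCommGroup M] [Module R M]
    [AddCommGroup N] [Module R N] (f g : M →ₗ[R] N) [FiniteDimensional R (range f)]
    [FiniteDimensional R (range g)] : FiniteDimensional R (range (f - g)) := by
  have hle : range (f - g) ≤ range f ⊔ range g := by
    rw [sub_eq_add_neg, ← range_neg g]
    exact range_add_le f (-g)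
  exact Submodule.finiteDimensional_of_le hle

section Comparison

variable {E F : Type*} [AddCommGroup E] [Module ℝ E] [AddCommGroup F] [Module ℝ F]
  {A B C : E →ₗ[ℝ] F}

lemma linInv_comp_self (hA : Bijective A) : linInv A ∘ₗ A = LinearMap.id := by
  ext x
  simp [linInv, dif_pos hA]

lemma comp_linInv_self (hA : Bijective A) : A ∘ₗ linInv A = LinearMap.id := by
  ext x
  simp [linInv, dif_pos hA]

lemma linInv_comp_comp (hA : Bijective A) (g : E →ₗ[ℝ] E) : linInv A ∘ₗ (A ∘ₗ g) = g := by
  rw [← LinearMap.comp_assoc, linInv_comp_self hA, LinearMap.id_comp]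

lemma finiteDimensional_range_id_sub_linInv_comp (hB : Bijective B)
    [FiniteDimensional ℝ (range (B - A))] :
    FiniteDimensional ℝ (range (LinearMap.id - linInv B ∘ₗ A)) := by
  rw [← linInv_comp_self hB, ← LinearMap.comp_sub, range_comp]
  infer_instance

lemma admDet_linInv_comp_self (hA : Bijective A) : admDet (linInv A ∘ₗ A) = 1 := by
  rw [linInv_comp_self hA, admDet_id]

lemma admDet_linInv_comp_eq_mul (hB : Bijective B) (hC : Bijective C)
    [FiniteDimensional ℝ (range (B - A))] [FiniteDimensional ℝ (range (C - B))] :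
    admDet (linInv C ∘ₗ A) = admDet (linInv C ∘ₗ B) * admDet (linInv B ∘ₗ A) := by
  have := finiteDimensional_range_id_sub_linInv_comp (A := A) hB
  have := finiteDimensional_range_id_sub_linInv_comp (A := B) hC
  rw [← admDet_comp, LinearMap.comp_assoc, ← LinearMap.comp_assoc A, comp_linInv_self hB,
    LinearMap.id_comp]

end Comparison

section Companion

variable {E F : Type*} [NormedAddCommGroup E] [NormedSpace ℝ E] [NormedAddCommGroup F]
  [NormedSpace ℝ F]

def IsCompanion (T K : E →L[ℝ] F) : Prop :=
  FiniteDimensional ℝ (range (K : E →ₗ[ℝ] F)) ∧ Bijective (T + K)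

lemma exists_isCompanion (T : E →L[ℝ] F) [FiniteDimensional ℝ (ker (T : E →ₗ[ℝ] F))]
    [FiniteDimensional ℝ (F ⧸ range (T : E →ₗ[ℝ] F))]
    (hind : Module.finrank ℝ (ker (T : E →ₗ[ℝ] F)) =
      Module.finrank ℝ (F ⧸ range (T : E →ₗ[ℝ] F))) :
    ∃ K, IsCompanion T K := by
  obtain ⟨P, hP⟩ := Submodule.ClosedComplemented.of_finiteDimensional (ker (T : E →ₗ[ℝ] F))
  obtain ⟨s, hs⟩ := (range (T : E →ₗ[ℝ] F)).mkQ.exists_rightInverse_of_surjective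
    (Submodule.range_mkQ _)
  obtain ⟨B⟩ := FiniteDimensional.nonempty_linearEquiv_of_finrank_eq hind
  set f := s ∘ₗ B.toLinearMap
  have hK : ((f.toContinuousLinearMap ∘L P : E →L[ℝ] F) : E →ₗ[ℝ] F) = f ∘ₗ (P : E →ₗ[ℝ] _) :=
    rfl
  refine ⟨f.toContinuousLinearMap ∘L P, ?_, ?_⟩
  · rw [hK]
    exact Submodule.finiteDimensional_of_le (range_comp_le_range _ f)
  · have := bijective_add_comp_of_ker_equiv_coker (T : E →ₗ[ℝ] F) P hP s hs B
    rwa [← LinearMap.comp_assoc, ← hK, ← ContinuousLinearMap.toLinearMap_add,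
      ContinuousLinearMap.coe_coe] at this

namespace IsCompanion

variable {T K K₁ K₂ K₃ : E →L[ℝ] F}

lemma finiteDimensional_range_sub (h₁ : IsCompanion T K₁) (h₂ : IsCompanion T K₂) :
    FiniteDimensional ℝ (range ((T + K₁).toLinearMap - (T + K₂).toLinearMap)) := by
  have := h₁.1
  have := h₂.1
  rw [ContinuousLinearMap.toLinearMap_add, ContinuousLinearMap.toLinearMap_add,
    add_sub_add_left_eq_sub]
  exact _root_.finiteDimensional_range_sub _ _

lemma admDet_eq_mul (h₁ : IsCompanion T K₁) (h₂ : IsCompanion T K₂) (h₃ : IsCompanion T K₃) :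
    admDet (linInv (T + K₃).toLinearMap ∘ₗ (T + K₁).toLinearMap) =
      admDet (linInv (T + K₃).toLinearMap ∘ₗ (T + K₂).toLinearMap) *
        admDet (linInv (T + K₂).toLinearMap ∘ₗ (T + K₁).toLinearMap) :=
  have := h₂.finiteDimensional_range_sub h₁
  have := h₃.finiteDimensional_range_sub h₂
  admDet_linInv_comp_eq_mul h₂.2 h₃.2

/-- `T + K'` is `T + K` precomposed with a reflection. -/
lemma exists_admDet_eq_neg_one [Nontrivial E] (hK : IsCompanion T K) :
    ∃ K', IsCompanion T K' ∧ admDet (linInv (T + K).toLinearMap ∘ₗ (T + K').toLinearMap) = -1 := by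
  obtain ⟨e, he⟩ := exists_ne (0 : E)
  obtain ⟨f, hf⟩ := SeparatingDual.exists_eq_one (R := ℝ) he
  have hfe : ((2 • f : StrongDual ℝ E) : E →ₗ[ℝ] ℝ) e = 2 := by simp [hf]
  set ρ := Module.reflection hfe
  set A := T + K
  set K' := K - (2 • f).smulRight (A e)
  have hA : (T + K').toLinearMap = A.toLinearMap ∘ₗ ρ.toLinearMap := by
    ext x
    simp only [K', A, ρ, ContinuousLinearMap.coe_coe, LinearMap.comp_apply, LinearEquiv.coe_coe,
      Module.reflection_apply, _root_.add_apply, _root_.sub_apply,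
      ContinuousLinearMap.smulRight_apply, map_sub, map_smul]
    abel
  refine ⟨K', ⟨?_, ?_⟩, ?_⟩
  · have := hK.1
    have hg : ((2 • f).smulRight (A e)).toLinearMap =
        toSpanSingleton ℝ F (A e) ∘ₗ (2 • f).toLinearMap := by
      ext; simp
    have : FiniteDimensional ℝ (range ((2 • f).smulRight (A e)).toLinearMap) := by
      rw [hg]
      exact Submodule.finiteDimensional_of_le (range_comp_le_range _ _)
    exact _root_.finiteDimensional_range_sub _ _
  · rw [← ContinuousLinearMap.coe_coe, hA, coe_comp]
    exact hK.2.comp ρ.bijective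
  · rw [hA, linInv_comp_comp hK.2, admDet_reflection]

end IsCompanion

end Companion

theorem companions_two_equivalence_classes_general
    {E F : Type*} [NormedAddCommGroup E] [NormedSpace ℝ E] [Nontrivial E]
    [NormedAddCommGroup F] [NormedSpace ℝ F]
    (T : E →L[ℝ] F)
    (hker : FiniteDimensional ℝ (LinearMap.ker (T : E →ₗ[ℝ] F)))
    (hcoker : FiniteDimensional ℝ (F ⧸ LinearMap.range (T : E →ₗ[ℝ] F)))
    (hind : Module.finrank ℝ (LinearMap.ker (T : E →ₗ[ℝ] F)) = Module.finrank ℝ (F ⧸ LinearMap.range (T : E →ₗ[ℝ] F))) :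
    let Cset : Set (E →L[ℝ] F) :=
      {K | FiniteDimensional ℝ (LinearMap.range (K : E →ₗ[ℝ] F)) ∧ Function.Bijective ⇑(T + K)}
    let R : (E →L[ℝ] F) → (E →L[ℝ] F) → Prop := fun K₁ K₂ =>
      0 < admDet (linInv (T + K₂).toLinearMap ∘ₗ (T + K₁).toLinearMap)
    (∀ K ∈ Cset, R K K) ∧
    (∀ K₁ ∈ Cset, ∀ K₂ ∈ Cset, R K₁ K₂ → R K₂ K₁) ∧
    (∀ K₁ ∈ Cset, ∀ K₂ ∈ Cset, ∀ K₃ ∈ Cset, R K₁ K₂ → R K₂ K₃ → R K₁ K₃) ∧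
    (∃ K₁ ∈ Cset, ∃ K₂ ∈ Cset, ¬ R K₁ K₂ ∧ ∀ K ∈ Cset, R K K₁ ∨ R K K₂) := by
  intro Cset R
  have hswap {K₁ K₂} (h₁ : IsCompanion T K₁) (h₂ : IsCompanion T K₂) :
      admDet (linInv (T + K₁).toLinearMap ∘ₗ (T + K₂).toLinearMap) *
        admDet (linInv (T + K₂).toLinearMap ∘ₗ (T + K₁).toLinearMap) = 1 := by
    rw [← h₁.admDet_eq_mul h₂ h₁, admDet_linInv_comp_self h₁.2]
  obtain ⟨K₁, h₁⟩ := exists_isCompanion T hind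
  obtain ⟨K₂, h₂, h₂₁⟩ := h₁.exists_admDet_eq_neg_one
  refine ⟨fun K hK => ?_, fun K₁ h₁ K₂ h₂ h => ?_, fun K₁ h₁ K₂ h₂ K₃ h₃ h₁₂ h₂₃ => ?_,
    K₂, h₂, K₁, h₁, ?_, fun K hK => ?_⟩
  · simp only [R, admDet_linInv_comp_self hK.2, zero_lt_one]
  · exact (pos_iff_pos_of_mul_pos (hswap h₁ h₂ ▸ one_pos)).mpr h
  · simpa only [R, IsCompanion.admDet_eq_mul h₁ h₂ h₃] using mul_pos h₂₃ h₁₂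
  · simp only [R, h₂₁]
    norm_num
  · have hK₁ := IsCompanion.admDet_eq_mul hK h₂ h₁
    rw [h₂₁, neg_one_mul] at hK₁
    rcases (right_ne_zero_of_mul_eq_one (hswap hK h₂)).lt_or_gt with hneg | hpos
    · exact Or.inr (by simp only [R, hK₁]; linarith)
    · exact Or.inl hpos

/-- For a Fredholm operator `T` of index zero between real Banach spaces, `E ≠ {0}`, the relation
`K₁ ∼ K₂ ↔ det((T+K₂)⁻¹(T+K₁)) > 0` on the set of companions of `T` is an equivalence relation
with exactly two equivalence classes. -/
theorem companions_two_equivalence_classes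
    {E F : Type*} [NormedAddCommGroup E] [NormedSpace ℝ E] [CompleteSpace E] [Nontrivial E]
    [NormedAddCommGroup F] [NormedSpace ℝ F] [CompleteSpace F]
    (T : E →L[ℝ] F)
    (hker : FiniteDimensional ℝ (LinearMap.ker (T : E →ₗ[ℝ] F)))
    (hcoker : FiniteDimensional ℝ (F ⧸ LinearMap.range (T : E →ₗ[ℝ] F)))
    (hind : Module.finrank ℝ (LinearMap.ker (T : E →ₗ[ℝ] F)) = Module.finrank ℝ (F ⧸ LinearMap.range (T : E →ₗ[ℝ] F))) :
    let Cset : Set (E →L[ℝ] F) :=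
      {K | FiniteDimensional ℝ (LinearMap.range (K : E →ₗ[ℝ] F)) ∧ Function.Bijective ⇑(T + K)}
    let R : (E →L[ℝ] F) → (E →L[ℝ] F) → Prop := fun K₁ K₂ =>
      0 < admDet (linInv (T + K₂).toLinearMap ∘ₗ (T + K₁).toLinearMap)
    (∀ K ∈ Cset, R K K) ∧
    (∀ K₁ ∈ Cset, ∀ K₂ ∈ Cset, R K₁ K₂ → R K₂ K₁) ∧
    (∀ K₁ ∈ Cset, ∀ K₂ ∈ Cset, ∀ K₃ ∈ Cset, R K₁ K₂ → R K₂ K₃ → R K₁ K₃) ∧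
    (∃ K₁ ∈ Cset, ∃ K₂ ∈ Cset, ¬ R K₁ K₂ ∧ ∀ K ∈ Cset, R K K₁ ∨ R K K₂) :=
  companions_two_equivalence_classes_general T hker hcoker hind
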